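/- Let H be a complex Hilbert space, π : ℤ → U(H) a unitary representation (i.e., π(k+l) = π(k)π(l), π(0) = id), and φ ∈ H. For a positive integer T let β_T(φ) = (1/(2T+1)) ∑_{|k|≤T} π(k)φ. Suppose there exist constants M > 0 and s ∈ (0,1) such that |⟨π(k)φ, φ⟩| ≤ M·|k|^{-s} for all nonzero integers k. Then ‖β_T(φ)‖² ≤ C·M·T^{-s} + ‖φ‖²/(2T+1) for some absolute constant C depending only on s. -/

import Mathlib

/-!
Expanding the square, `‖∑_{|k|≤T} π k φ‖² ≤ ∑_{|k|,|l|≤T} |⟪π (k - l) φ, φ⟫|`, and for each `k`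
the differences `k - l` run injectively through `[-2T, 2T]`, so the double sum is at most
`(2T+1) ∑_{|d|≤2T} |⟪π d φ, φ⟫| ≤ (2T+1) (‖φ‖² + 2M ∑_{m=1}^{2T} m^{-s})`. Comparing with
`∫ x^{-s}` gives `∑_{m=1}^{N} m^{-s} ≤ N^{1-s}/(1-s)`, and dividing by `(2T+1)²` leaves
`‖φ‖²/(2T+1) + (2/(1-s)) M T^{-s}`.
-/

open Finset

open scoped InnerProductSpace

theorem norm_sum_sq_le_sum_sum_norm_inner {𝕜 E ι : Type*} [RCLike 𝕜] [NormedAddCommGroup E]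
    [InnerProductSpace 𝕜 E] (s : Finset ι) (v : ι → E) :
    ‖∑ i ∈ s, v i‖ ^ 2 ≤ ∑ i ∈ s, ∑ j ∈ s, ‖⟪v i, v j⟫_𝕜‖ := by
  rw [← inner_self_eq_norm_sq (𝕜 := 𝕜), sum_inner]
  simp_rw [inner_sum]
  calc _ ≤ ‖∑ i ∈ s, ∑ j ∈ s, ⟪v i, v j⟫_𝕜‖ := RCLike.re_le_norm _
    _ ≤ ∑ i ∈ s, ‖∑ j ∈ s, ⟪v i, v j⟫_𝕜‖ := norm_sum_le _ _
    _ ≤ _ := sum_le_sum fun i _ ↦ norm_sum_le _ _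

theorem LinearIsometryEquiv.inner_apply_apply_eq_inner_sub {𝕜 E : Type*} [RCLike 𝕜]
    [NormedAddCommGroup E] [InnerProductSpace 𝕜 E] (π : ℤ → (E ≃ₗᵢ[𝕜] E))
    (hmul : ∀ k l : ℤ, π (k + l) = (π k).trans (π l)) (h0 : π 0 = LinearIsometryEquiv.refl 𝕜 E)
    (φ : E) (k l : ℤ) : ⟪π k φ, π l φ⟫_𝕜 = ⟪π (k - l) φ, φ⟫_𝕜 := by
  have hshift (m : ℤ) : π (-l) (π m φ) = π (m - l) φ := by
    rw [sub_eq_add_neg, hmul]; rfl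
  rw [← (π (-l)).inner_map_map, hshift, hshift, sub_self, h0]
  rfl

theorem Finset.sum_sum_Icc_sub_le {M : Type*} [AddCommMonoid M] [Preorder M] [AddLeftMono M]
    {f : ℤ → M} (hf : ∀ d, 0 ≤ f d) (T : ℕ) :
    ∑ k ∈ Icc (-T : ℤ) T, ∑ l ∈ Icc (-T : ℤ) T, f (k - l) ≤
      (2 * T + 1) • ∑ d ∈ Icc (-(2 * T : ℕ) : ℤ) (2 * T : ℕ), f d := by
  have hcard : #(Icc (-T : ℤ) T) = 2 * T + 1 := by rw [Int.card_Icc]; omega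
  rw [← hcard]
  refine sum_le_card_nsmul _ _ _ fun k hk ↦ ?_
  rw [mem_Icc] at hk
  rw [← sum_image (f := f) (g := (k - ·)) fun x _ y _ h ↦ by simpa using h]
  refine sum_le_sum_of_subset_of_nonneg (fun d hd ↦ ?_) fun d _ _ ↦ hf d
  obtain ⟨l, hl, rfl⟩ := mem_image.1 hd
  rw [mem_Icc] at hl ⊢
  push_cast
  omega

theorem norm_sum_Icc_apply_sq_le {E : Type*} [NormedAddCommGroup E] [InnerProductSpace ℂ E]
    (π : ℤ → (E ≃ₗᵢ[ℂ] E)) (hmul : ∀ k l : ℤ, π (k + l) = (π k).trans (π l))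
    (h0 : π 0 = LinearIsometryEquiv.refl ℂ E) (φ : E) (T : ℕ) :
    ‖∑ k ∈ Icc (-T : ℤ) T, π k φ‖ ^ 2 ≤
      (2 * T + 1) * ∑ d ∈ Icc (-(2 * T : ℕ) : ℤ) (2 * T : ℕ), ‖⟪π d φ, φ⟫_ℂ‖ := by
  calc _ ≤ ∑ k ∈ Icc (-T : ℤ) T, ∑ l ∈ Icc (-T : ℤ) T, ‖⟪π k φ, π l φ⟫_ℂ‖ :=
        norm_sum_sq_le_sum_sum_norm_inner _ _
    _ = ∑ k ∈ Icc (-T : ℤ) T, ∑ l ∈ Icc (-T : ℤ) T, ‖⟪π (k - l) φ, φ⟫_ℂ‖ := by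
        simp_rw [LinearIsometryEquiv.inner_apply_apply_eq_inner_sub π hmul h0]
    _ ≤ _ := by
        have := sum_sum_Icc_sub_le (fun d ↦ norm_nonneg ⟪π d φ, φ⟫_ℂ) T
        rw [nsmul_eq_mul] at this
        exact_mod_cast this

theorem Finset.sum_Icc_neg_eq_add_sum_range {R : Type*} [AddCommGroup R] (F : ℤ → R) (N : ℕ) :
    ∑ d ∈ Icc (-N : ℤ) N, F d = F 0 + ∑ i ∈ range N, (F (i + 1) + F (-(i + 1))) := by
  induction N with
  | zero => simp
  | succ N ih =>
    rw [Nat.cast_succ, sum_Icc_succ_eq_add_endpoints, ih, sum_range_succ]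
    abel

theorem Real.sum_range_add_one_rpow_neg_le {s : ℝ} (hs0 : 0 ≤ s) (hs1 : s < 1) (N : ℕ) :
    ∑ i ∈ range N, ((i : ℝ) + 1) ^ (-s) ≤ (N : ℝ) ^ (1 - s) / (1 - s) := by
  have h1s : 0 < 1 - s := sub_pos.2 hs1
  cases N with
  | zero => simp [Real.zero_rpow h1s.ne']
  | succ n =>
    -- the term `i = 0` is split off: `x ^ (-s)` is not antitone on `[0, 1]` since `0 ^ (-s) = 0`
    have hanti : AntitoneOn (fun x : ℝ ↦ x ^ (-s)) (Set.Icc 1 (1 + n)) :=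
      fun x hx y _ hxy ↦ Real.rpow_le_rpow_of_nonpos (one_pos.trans_le hx.1) hxy (neg_nonpos.2 hs0)
    have hint : ∫ x in (1 : ℝ)..1 + n, x ^ (-s) = ((n + 1 : ℝ) ^ (1 - s) - 1) / (1 - s) := by
      rw [integral_rpow (Or.inl (by linarith)), Real.one_rpow, add_comm (1 : ℝ), neg_add_eq_sub]
    have htail : ∑ i ∈ range n, ((↑(i + 1) : ℝ) + 1) ^ (-s) ≤
        ((n + 1 : ℝ) ^ (1 - s) - 1) / (1 - s) := by
      rw [← hint]
      simpa only [add_comm (1 : ℝ)] using hanti.sum_le_integral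
    rw [sum_range_succ', Nat.cast_zero, zero_add, Real.one_rpow, Nat.cast_succ]
    have : 1 ≤ 1 / (1 - s) := by rw [le_div_iff₀ h1s]; linarith
    calc _ ≤ ((n + 1 : ℝ) ^ (1 - s) - 1) / (1 - s) + 1 / (1 - s) := by gcongr
      _ = _ := by ring

theorem sum_Icc_le_add_of_le_rpow_neg {s M : ℝ} (hs0 : 0 ≤ s) (hs1 : s < 1) (hM : 0 ≤ M)
    {c : ℤ → ℝ} (hc : ∀ d : ℤ, d ≠ 0 → c d ≤ M * (|d| : ℝ) ^ (-s)) (N : ℕ) :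
    ∑ d ∈ Icc (-N : ℤ) N, c d ≤ c 0 + 2 * M * ((N : ℝ) ^ (1 - s) / (1 - s)) := by
  have hpair (i : ℕ) : c (i + 1) + c (-(i + 1)) ≤ 2 * M * ((i : ℝ) + 1) ^ (-s) := by
    have habs : |((i + 1 : ℤ) : ℝ)| = (i : ℝ) + 1 := by
      push_cast
      exact abs_of_nonneg (by positivity)
    have h₁ := hc (i + 1) (by omega)
    have h₂ := hc (-(i + 1)) (by omega)
    rw [Int.cast_neg, abs_neg, habs] at h₂
    rw [habs] at h₁
    linarith
  rw [sum_Icc_neg_eq_add_sum_range]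
  gcongr
  calc _ ≤ ∑ i ∈ range N, 2 * M * ((i : ℝ) + 1) ^ (-s) := sum_le_sum fun i _ ↦ hpair i
    _ ≤ _ := by rw [← mul_sum]; gcongr; exact Real.sum_range_add_one_rpow_neg_le hs0 hs1 N

theorem two_mul_rpow_one_sub_le {s T : ℝ} (hs : 0 ≤ s) (hT : 0 < T) :
    (2 * T) ^ (1 - s) ≤ (2 * T + 1) * T ^ (-s) := by
  rw [sub_eq_neg_add, Real.rpow_add (by positivity), Real.rpow_one, mul_comm]
  exact mul_le_mul (by linarith) (Real.rpow_le_rpow_of_nonpos hT (by linarith) (neg_nonpos.2 hs))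
    (by positivity) (by positivity)

theorem effective_mean_ergodic_abstract (s : ℝ) (hs : s ∈ Set.Ioo (0 : ℝ) 1) :
    ∃ C > 0, ∀ (H : Type) (_ : NormedAddCommGroup H) (_ : InnerProductSpace ℂ H),
      ∀ (π : ℤ → (H ≃ₗᵢ[ℂ] H)),
        (∀ k l : ℤ, π (k + l) = (π k).trans (π l)) →
        π 0 = LinearIsometryEquiv.refl ℂ H →
        ∀ (φ : H) (M : ℝ), 0 < M →
          (∀ k : ℤ, k ≠ 0 → ‖(inner ℂ (π k φ) φ : ℂ)‖ ≤ M * (|k| : ℝ) ^ (-s)) →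
          ∀ T : ℕ, 1 ≤ T →
            ‖(1 / ((2 * T + 1 : ℕ) : ℂ)) •
                ∑ k ∈ Finset.Icc (-(T : ℤ)) T, π k φ‖ ^ 2 ≤
              C * M * (T : ℝ) ^ (-s) + ‖φ‖ ^ 2 / (2 * T + 1) := by
  obtain ⟨hs0, hs1⟩ := hs
  refine ⟨2 / (1 - s), div_pos two_pos (sub_pos.2 hs1), ?_⟩
  intro H _ _ π hmul h0 φ M hM hbound T hT
  have hsum := (norm_sum_Icc_apply_sq_le π hmul h0 φ T).trans <| mul_le_mul_of_nonneg_left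
    (sum_Icc_le_add_of_le_rpow_neg hs0.le hs1 hM.le hbound (2 * T)) (by positivity)
  have hφ : ‖⟪π 0 φ, φ⟫_ℂ‖ = ‖φ‖ ^ 2 := by simp [h0, inner_self_eq_norm_sq_to_K]
  have hpow := two_mul_rpow_one_sub_le hs0.le (Nat.cast_pos.2 hT)
  rw [hφ, Nat.cast_mul, Nat.cast_ofNat] at hsum
  rw [norm_smul, mul_pow, norm_div, norm_one, Complex.norm_natCast, div_pow, one_pow,
    one_div_mul_eq_div, div_le_iff₀ (by positivity)]
  push_cast
  calc _ ≤ _ := hsum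
    _ ≤ (2 * T + 1) * (‖φ‖ ^ 2 + 2 / (1 - s) * M * T ^ (-s) * (2 * T + 1)) := by
      gcongr (2 * T + 1) * (_ + ?_)
      calc 2 * M * ((2 * T) ^ (1 - s) / (1 - s)) = 2 / (1 - s) * M * (2 * T) ^ (1 - s) := by ring
        _ ≤ 2 / (1 - s) * M * ((2 * T + 1) * T ^ (-s)) := by gcongr
        _ = _ := by ring
    _ = _ := by field_simp; ring
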